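/- For μ, ν ∈ 𝐌, the Lorenz functions satisfy L_μ = L_ν on [0,1] if and only if ν is a rescaling of μ, i.e. there exists α > 0 such that ν is the pushforward of μ under the map x ↦ α·x. -/

import Mathlib

/-!
The Lorenz function determines the partial integrals `∫₀ᵖ Q` of the quantile function up to the
factor `1 / m`. If `∫₀ᵖ Q_ν = α ∫₀ᵖ Q_μ` for all `p < 1`, then on every `[q, p]` monotonicity gives
`(p - q) Q_ν(q) ≤ α (p - q) Q_μ(p)`, and left continuity of quantiles yields `Q_ν ≤ α Q_μ`; by
symmetry `Q_ν = α Q_μ` on `(0, 1)`. Since every measure of `𝐌` is the image of Lebesgue measure on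
`(0, 1)` under its quantile function, `ν` is the image of `μ` under `x ↦ α x`. Conversely, rescaling
multiplies both the quantile function and the mean by `α`.
-/

open MeasureTheory Filter Topology

noncomputable section

/-- The mean of a measure on `ℝ`. -/
def mMean (μ : Measure ℝ) : ℝ := ∫ x, x ∂μ

/-- `μ ∈ 𝐌`: a Borel probability measure on `ℝ₊` (modelled as a measure on `ℝ` giving no
mass to negative numbers) with finite nonzero mean. -/
def MemM (μ : Measure ℝ) : Prop :=
  IsProbabilityMeasure μ ∧ μ {x | x < 0} = 0 ∧ Integrable id μ ∧ 0 < mMean μ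

/-- The cumulative distribution function `F_μ(x) = μ([0,x])`. -/
def cdfR (μ : Measure ℝ) (x : ℝ) : ℝ := (μ (Set.Icc 0 x)).toReal

/-- The quantile function `Q_μ(p) = inf {x ∈ ℝ₊ : F_μ(x) ≥ p}`. -/
def quant (μ : Measure ℝ) (p : ℝ) : ℝ := sInf {x : ℝ | 0 ≤ x ∧ p ≤ cdfR μ x}

/-- The Lorenz function `L_μ(p) = (∫_0^p Q_μ(t) dt) / m_μ`. -/
def lorenz (μ : Measure ℝ) (p : ℝ) : ℝ := (∫ t in (0:ℝ)..p, quant μ t) / mMean μ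

/-- The pseudo-Lorenz function `Λ_μ(p) = (∫_{[0,Q_μ(p)]} u dμ(u)) / m_μ` for `p ∈ [0,1)`,
with `Λ_μ(1) = 1`. -/
def pseudoLorenz (μ : Measure ℝ) (p : ℝ) : ℝ :=
  if p = 1 then 1 else (∫ u in Set.Icc (0:ℝ) (quant μ p), u ∂μ) / mMean μ

/-- The Gini coefficient `G(μ) = (∫∫ |x-y| d(μ⊗μ)) / (2 m_μ)`. -/
def gini (μ : Measure ℝ) : ℝ := (∫ z : ℝ × ℝ, |z.1 - z.2| ∂(μ.prod μ)) / (2 * mMean μ)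

/-- The Hoover coefficient `H(μ) = (∫ |x - m_μ| dμ) / (2 m_μ)`. -/
def hoover (μ : Measure ℝ) : ℝ := (∫ x, |x - mMean μ| ∂μ) / (2 * mMean μ)

/-- The Wasserstein-1 distance `W₁(μ,ν) = ∫_0^1 |Q_μ - Q_ν|`. -/
def W1 (μ ν : Measure ℝ) : ℝ := ∫ t in (0:ℝ)..1, |quant μ t - quant ν t|

/-- Weak convergence of a sequence of measures: convergence of integrals of all bounded
continuous functions. -/
def WeakCv (μs : ℕ → Measure ℝ) (ν : Measure ℝ) : Prop :=
  ∀ f : ℝ → ℝ, Continuous f → (∃ C : ℝ, ∀ x, |f x| ≤ C) →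
    Tendsto (fun n => ∫ x, f x ∂(μs n)) atTop (𝓝 (∫ x, f x ∂ν))

/-- Uniform integrability of a family of measures on `ℝ₊`:
`sup_i ∫_{(α,∞)} x dμ_i(x) → 0` as `α → +∞`. -/
def UnifInt {ι : Type*} (μs : ι → Measure ℝ) : Prop :=
  ∀ ε > (0:ℝ), ∃ A : ℝ, ∀ α ≥ A, ∀ i, (∫ x in Set.Ioi α, x ∂(μs i)) ≤ ε

end

open Set ProbabilityTheory
open scoped Pointwise

lemma cdfR_eq_cdf (μ : Measure ℝ) [IsProbabilityMeasure μ] (hμ : μ (Iio 0) = 0) (x : ℝ) :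
    cdfR μ x = cdf μ x := by
  rw [cdfR, cdf_eq_real, Measure.real, ← Ici_inter_Iic, inter_comm,
    measure_inter_conull (by rwa [compl_Ici])]

lemma cdfR_of_neg (μ : Measure ℝ) {x : ℝ} (hx : x < 0) : cdfR μ x = 0 := by
  simp [cdfR, Icc_eq_empty_of_lt hx]

lemma cdfR_map_const_mul (μ : Measure ℝ) {α : ℝ} (hα : 0 < α) (x : ℝ) :
    cdfR (μ.map (α * ·)) x = cdfR μ (x / α) := by
  rw [cdfR, cdfR, Measure.map_apply (measurable_const_mul α) measurableSet_Icc,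
    preimage_const_mul_Icc₀ _ _ hα, zero_div]

lemma cdfR_mono (μ : Measure ℝ) [IsFiniteMeasure μ] : Monotone (cdfR μ) :=
  fun _ _ h => ENNReal.toReal_mono (measure_ne_top _ _) (measure_mono (Icc_subset_Icc_right h))

lemma quant_nonneg (μ : Measure ℝ) (p : ℝ) : 0 ≤ quant μ p :=
  Real.sInf_nonneg fun _ hx => hx.1

lemma quant_le_of_le_cdfR {μ : Measure ℝ} {p x : ℝ} (hx : 0 ≤ x) (h : p ≤ cdfR μ x) :
    quant μ p ≤ x :=
  csInf_le ⟨0, fun _ hy => hy.1⟩ ⟨hx, h⟩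

section Quantile

variable {μ : Measure ℝ} [IsProbabilityMeasure μ]

/-- The infimum defining `quant μ p` is attained, by right continuity of the distribution
function. -/
lemma le_cdfR_quant (hμ : μ (Iio 0) = 0) {p : ℝ} (hp : p < 1) : p ≤ cdfR μ (quant μ p) := by
  obtain ⟨x, hxp, hx0⟩ :=
    (((tendsto_cdf_atTop μ).eventually (Ioi_mem_nhds hp)).and (eventually_ge_atTop 0)).exists
  have hne : {x : ℝ | 0 ≤ x ∧ p ≤ cdfR μ x}.Nonempty :=
    ⟨x, hx0, (cdfR_eq_cdf μ hμ x).symm ▸ hxp.le⟩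
  have h_right : ∀ᶠ y in 𝓝[>] (quant μ p), p ≤ cdf μ y := by
    filter_upwards [self_mem_nhdsWithin] with y hy
    obtain ⟨z, hz, hzy⟩ := exists_lt_of_csInf_lt hne hy
    rw [← cdfR_eq_cdf μ hμ]
    exact hz.2.trans (cdfR_mono μ hzy.le)
  rw [cdfR_eq_cdf μ hμ]
  exact ge_of_tendsto (((cdf μ).right_continuous _).mono Ioi_subset_Ici_self) h_right

lemma quant_le_iff (hμ : μ (Iio 0) = 0) {p x : ℝ} (hp : p ∈ Ioo 0 1) :
    quant μ p ≤ x ↔ p ≤ cdfR μ x := by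
  refine ⟨fun h => ?_, fun h => quant_le_of_le_cdfR ?_ h⟩
  · exact (le_cdfR_quant hμ hp.2).trans (cdfR_mono μ h)
  · by_contra! hx
    linarith [hp.1, cdfR_of_neg μ hx]

lemma quant_monotoneOn (hμ : μ (Iio 0) = 0) : MonotoneOn (quant μ) (Iio 1) :=
  fun _ _ q hq hpq => quant_le_of_le_cdfR (quant_nonneg μ q) (hpq.trans (le_cdfR_quant hμ hq))

lemma quant_le_of_forall_lt (hμ : μ (Iio 0) = 0) {p c : ℝ} (hp : p ≤ 1) (hc : 0 ≤ c)
    (h : ∀ q ∈ Ioo 0 p, quant μ q ≤ c) : quant μ p ≤ c := by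
  refine quant_le_of_le_cdfR hc (le_of_forall_lt_imp_le_of_dense fun q hq => ?_)
  rcases le_or_gt q 0 with hq0 | hq0
  · exact hq0.trans ENNReal.toReal_nonneg
  · exact (quant_le_iff hμ ⟨hq0, hq.trans_le hp⟩).1 (h q ⟨hq0, hq⟩)

lemma quant_intervalIntegrable (hμ : μ (Iio 0) = 0) {a b : ℝ} (ha : a < 1) (hb : b < 1) :
    IntervalIntegrable (quant μ) volume a b :=
  ((quant_monotoneOn hμ).mono fun _ hx => hx.2.trans_lt (max_lt ha hb)).intervalIntegrable

lemma aemeasurable_quant (hμ : μ (Iio 0) = 0) :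
    AEMeasurable (quant μ) (volume.restrict (Ioo 0 1)) :=
  aemeasurable_restrict_of_monotoneOn measurableSet_Ioo
    ((quant_monotoneOn hμ).mono fun _ hp => hp.2)

theorem map_quant_volume_Ioo (hμ : μ (Iio 0) = 0) :
    (volume.restrict (Ioo 0 1)).map (quant μ) = μ := by
  have : IsProbabilityMeasure (volume.restrict (Ioo (0 : ℝ) 1)) := ⟨by simp⟩
  have := Measure.isProbabilityMeasure_map (aemeasurable_quant hμ)
  refine Measure.ext_of_Iic _ _ fun x => ?_
  have hpre : quant μ ⁻¹' Iic x ∩ Ioo 0 1 = Iic (cdf μ x) ∩ Ioo 0 1 := by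
    ext p
    simp only [mem_inter_iff, mem_preimage, mem_Iic, and_congr_left_iff]
    intro hp
    rw [quant_le_iff hμ hp, cdfR_eq_cdf μ hμ]
  rw [Measure.map_apply_of_aemeasurable (aemeasurable_quant hμ) measurableSet_Iic,
    Measure.restrict_apply' measurableSet_Ioo, hpre, ← Measure.restrict_apply' measurableSet_Ioo,
    Measure.restrict_congr_set Ioo_ae_eq_Ioc, Measure.restrict_apply measurableSet_Iic,
    Iic_inter_Ioc_of_le (cdf_le_one μ x), Real.volume_Ioc, sub_zero, ofReal_cdf]

end Quantile

lemma quant_map_const_mul (μ : Measure ℝ) {α : ℝ} (hα : 0 < α) (p : ℝ) :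
    quant (μ.map (α * ·)) p = α * quant μ p := by
  have hset : {x | 0 ≤ x ∧ p ≤ cdfR (μ.map (α * ·)) x} = α • {x | 0 ≤ x ∧ p ≤ cdfR μ x} := by
    ext x
    simp [mem_smul_set_iff_inv_smul_mem₀ hα.ne', cdfR_map_const_mul μ hα, div_eq_inv_mul, hα]
  rw [quant, hset, Real.sInf_smul_of_nonneg hα.le, smul_eq_mul, quant]

lemma mMean_map_const_mul (μ : Measure ℝ) (α : ℝ) : mMean (μ.map (α * ·)) = α * mMean μ := by
  rw [mMean, integral_map (measurable_const_mul α).aemeasurable measurable_id'.aestronglyMeasurable,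
    integral_const_mul, mMean]

lemma lorenz_map_const_mul (μ : Measure ℝ) {α : ℝ} (hα : 0 < α) (p : ℝ) :
    lorenz (μ.map (α * ·)) p = lorenz μ p := by
  simp only [lorenz, mMean_map_const_mul, quant_map_const_mul μ hα,
    intervalIntegral.integral_const_mul, mul_div_mul_left _ _ hα.ne']

lemma MonotoneOn.sub_mul_le_intervalIntegral {f : ℝ → ℝ} {a b : ℝ} (hab : a ≤ b)
    (hf : MonotoneOn f (Icc a b)) : (b - a) * f a ≤ ∫ x in a..b, f x := by
  have := intervalIntegral.integral_mono_on (μ := volume) hab intervalIntegrable_const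
    (hf.mono (uIcc_of_le hab).subset).intervalIntegrable fun x hx => hf (left_mem_Icc.2 hab) hx hx.1
  simpa [mul_comm] using this

lemma MonotoneOn.intervalIntegral_le_sub_mul {f : ℝ → ℝ} {a b : ℝ} (hab : a ≤ b)
    (hf : MonotoneOn f (Icc a b)) : ∫ x in a..b, f x ≤ (b - a) * f b := by
  have := intervalIntegral.integral_mono_on (μ := volume) hab
    (hf.mono (uIcc_of_le hab).subset).intervalIntegrable intervalIntegrable_const
    fun x hx => hf hx (right_mem_Icc.2 hab) hx.2
  simpa [mul_comm] using this

section TwoMeasures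

variable {μ ν : Measure ℝ} [IsProbabilityMeasure μ] [IsProbabilityMeasure ν]

lemma quant_le_mul_of_integral_eq (hμ : μ (Iio 0) = 0) (hν : ν (Iio 0) = 0) {α : ℝ}
    (hα : 0 ≤ α)
    (h : ∀ p ∈ Ico (0 : ℝ) 1, ∫ t in 0..p, quant ν t = α * ∫ t in 0..p, quant μ t)
    {p : ℝ} (hp : p ∈ Ioo (0 : ℝ) 1) : quant ν p ≤ α * quant μ p := by
  refine quant_le_of_forall_lt hν hp.2.le (mul_nonneg hα (quant_nonneg μ p)) fun q hq => ?_
  have hq1 : q < 1 := hq.2.trans hp.2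
  have hsub : Icc q p ⊆ Iio 1 := fun _ ht => ht.2.trans_lt hp.2
  have h_qp : ∫ t in q..p, quant ν t = α * ∫ t in q..p, quant μ t := by
    rw [← intervalIntegral.integral_interval_sub_left (quant_intervalIntegrable hν one_pos hp.2)
        (quant_intervalIntegrable hν one_pos hq1),
      ← intervalIntegral.integral_interval_sub_left (quant_intervalIntegrable hμ one_pos hp.2)
        (quant_intervalIntegrable hμ one_pos hq1),
      h p ⟨hp.1.le, hp.2⟩, h q ⟨hq.1.le, hq1⟩, mul_sub]
  have key : (p - q) * quant ν q ≤ (p - q) * (α * quant μ p) :=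
    calc (p - q) * quant ν q ≤ ∫ t in q..p, quant ν t :=
          ((quant_monotoneOn hν).mono hsub).sub_mul_le_intervalIntegral hq.2.le
      _ = α * ∫ t in q..p, quant μ t := h_qp
      _ ≤ α * ((p - q) * quant μ p) := mul_le_mul_of_nonneg_left
          (((quant_monotoneOn hμ).mono hsub).intervalIntegral_le_sub_mul hq.2.le) hα
      _ = (p - q) * (α * quant μ p) := by ring
  exact le_of_mul_le_mul_left key (sub_pos.2 hq.2)

lemma quant_eq_mul_of_integral_eq (hμ : μ (Iio 0) = 0) (hν : ν (Iio 0) = 0) {α : ℝ}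
    (hα : 0 < α)
    (h : ∀ p ∈ Ico (0 : ℝ) 1, ∫ t in 0..p, quant ν t = α * ∫ t in 0..p, quant μ t)
    {p : ℝ} (hp : p ∈ Ioo (0 : ℝ) 1) : quant ν p = α * quant μ p := by
  have h' : ∀ p ∈ Ico (0 : ℝ) 1, ∫ t in 0..p, quant μ t = α⁻¹ * ∫ t in 0..p, quant ν t :=
    fun p hp => by rw [h p hp, inv_mul_cancel_left₀ hα.ne']
  exact (quant_le_mul_of_integral_eq hμ hν hα.le h hp).antisymm
    ((le_inv_mul_iff₀ hα).1 (quant_le_mul_of_integral_eq hν hμ (inv_nonneg.2 hα.le) h' hp))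

lemma eq_map_const_mul_of_quant_eq (hμ : μ (Iio 0) = 0) (hν : ν (Iio 0) = 0) {α : ℝ}
    (h : ∀ p ∈ Ioo (0 : ℝ) 1, quant ν p = α * quant μ p) : ν = μ.map (α * ·) :=
  calc ν = (volume.restrict (Ioo 0 1)).map (quant ν) := (map_quant_volume_Ioo hν).symm
    _ = (volume.restrict (Ioo 0 1)).map ((α * ·) ∘ quant μ) :=
        Measure.map_congr ((ae_restrict_mem measurableSet_Ioo).mono h)
    _ = ((volume.restrict (Ioo 0 1)).map (quant μ)).map (α * ·) :=
        ((measurable_const_mul α).aemeasurable.map_map_of_aemeasurable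
          (aemeasurable_quant hμ)).symm
    _ = μ.map (α * ·) := by rw [map_quant_volume_Ioo hμ]

end TwoMeasures

/-- Two measures of `𝐌` have the same Lorenz function on `[0,1]`
iff one is a rescaling of the other. -/
theorem lorenz_eq_iff_rescaling (μ ν : Measure ℝ) (hμ : MemM μ) (hν : MemM ν) :
    (∀ p ∈ Set.Icc (0:ℝ) 1, lorenz μ p = lorenz ν p) ↔
      ∃ α : ℝ, 0 < α ∧ ν = Measure.map (fun x => α * x) μ := by
  obtain ⟨_, hμ0, -, hmμ⟩ := hμ
  obtain ⟨_, hν0, -, hmν⟩ := hν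
  constructor
  · intro h
    have hα : 0 < mMean ν / mMean μ := div_pos hmν hmμ
    have hint : ∀ p ∈ Ico (0 : ℝ) 1,
        ∫ t in 0..p, quant ν t = mMean ν / mMean μ * ∫ t in 0..p, quant μ t := fun p hp => by
      have hp := h p (Ico_subset_Icc_self hp)
      rw [lorenz, lorenz, div_eq_div_iff hmμ.ne' hmν.ne'] at hp
      field_simp
      linarith
    exact ⟨_, hα, eq_map_const_mul_of_quant_eq hμ0 hν0
      fun p hp => quant_eq_mul_of_integral_eq hμ0 hν0 hα hint hp⟩
  · rintro ⟨α, hα, rfl⟩ p -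
    exact (lorenz_map_const_mul μ hα p).symm
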